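/- arXiv:2512.04950 — 2 statements merged into one kernel-verified Lean document; each statement's English description precedes it below -/
import Mathlib

section
/- For each δ ∈ {∃, weak, full}: every discrete META A with a distinguished location lf can be effectively extended to a discrete META A' — obtained by adding a fresh private location reachable from the initial location with unguarded self-loops incrementing each energy variable, a fresh location l1 reachable from lf with self-loops incrementing and decrementing each energy variable, and a fresh final location reachable without guard from both the private location and l1 — such that A' is δ-EN-opaque if and only if lf is reachable in A. Hence reachability in discrete METAs reduces to δ-EN-opacity. -/
namespace METAOpacity

open scoped Classical

/-- An inequality `v ⋈ d`: a variable index (clocks first, then energy variables),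
a comparison code (`0` = `<`, `1` = `≤`, `2` = `≥`, `3` = `>`) and an integer constant. -/
abbrev Ineq : Type := ℕ × ℕ × ℤ

/-- An edge: source location, guard, action (`none` = ε), clock resets,
integer energy updates, target location. -/
abbrev Edge : Type := ℕ × List Ineq × Option ℕ × List ℕ × List ℤ × ℕ

/-- A finitely presented guarded multi-energy timed automaton (guarded META):
number of actions, number of locations (location `0` is the initial one), number of
clocks, number of energy variables, list of private locations, list of final locations,
invariants (one per location), integer energy rates (one list per location, one entry per
energy variable), and edges.  Being a nested product of countable discrete data, this
type is `Primcodable`, so computability of functions on it makes sense. -/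
abbrev GMETA : Type :=
  ℕ × ℕ × ℕ × ℕ × List ℕ × List ℕ × List (List Ineq) × List (List ℤ) × List Edge

def numAct (A : GMETA) : ℕ := A.1
def numLoc (A : GMETA) : ℕ := A.2.1
def numClk (A : GMETA) : ℕ := A.2.2.1
def numEn (A : GMETA) : ℕ := A.2.2.2.1
def privLocs (A : GMETA) : List ℕ := A.2.2.2.2.1
def finalLocs (A : GMETA) : List ℕ := A.2.2.2.2.2.1
def invs (A : GMETA) : List (List Ineq) := A.2.2.2.2.2.2.1
def rates (A : GMETA) : List (List ℤ) := A.2.2.2.2.2.2.2.1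
def edges (A : GMETA) : List Edge := A.2.2.2.2.2.2.2.2

def edgeSrc (e : Edge) : ℕ := e.1
def edgeGuard (e : Edge) : List Ineq := e.2.1
def edgeAct (e : Edge) : Option ℕ := e.2.2.1
def edgeResets (e : Edge) : List ℕ := e.2.2.2.1
def edgeUpdates (e : Edge) : List ℤ := e.2.2.2.2.1
def edgeTgt (e : Edge) : ℕ := e.2.2.2.2.2

/-- A semantic state: location, clock valuation, energy valuation. -/
abbrev EState : Type := ℕ × (ℕ → ℝ) × (ℕ → ℝ)

def initState : EState := (0, fun _ => 0, fun _ => 0)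

/-- Satisfaction of a single comparison. -/
def cmpSat (c : ℕ) (x : ℝ) (d : ℤ) : Prop :=
  if c = 0 then x < (d : ℝ)
  else if c = 1 then x ≤ (d : ℝ)
  else if c = 2 then (d : ℝ) ≤ x
  else if c = 3 then (d : ℝ) < x
  else False

/-- Value of variable `i` (a clock if `i < numClk A`, an energy variable otherwise). -/
def varVal (A : GMETA) (w v : ℕ → ℝ) (i : ℕ) : ℝ :=
  if i < numClk A then w i else v (i - numClk A)

/-- Satisfaction of a conjunction of inequalities. -/
def satIneqs (A : GMETA) (w v : ℕ → ℝ) (g : List Ineq) : Prop :=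
  ∀ q ∈ g, cmpSat q.2.1 (varVal A w v q.1) q.2.2

def invOf (A : GMETA) (l : ℕ) : List Ineq := (invs A).getD l []

def rateOf (A : GMETA) (l i : ℕ) : ℤ := ((rates A).getD l []).getD i 0

/-- A state is valid when its location exists, clocks and energies are non-negative,
and the invariant of the current location holds. -/
def validState (A : GMETA) (s : EState) : Prop :=
  s.1 < numLoc A ∧ (∀ i, 0 ≤ s.2.1 i) ∧ (∀ i, 0 ≤ s.2.2 i) ∧
    satIneqs A s.2.1 s.2.2 (invOf A s.1)

def elapseClocks (w : ℕ → ℝ) (t : ℝ) : ℕ → ℝ := fun i => w i + t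

def elapseEnergies (A : GMETA) (l : ℕ) (v : ℕ → ℝ) (t : ℝ) : ℕ → ℝ :=
  fun i => v i + (rateOf A l i : ℝ) * t

def resetClocks (R : List ℕ) (w : ℕ → ℝ) : ℕ → ℝ := fun i => if i ∈ R then 0 else w i

def updateEnergies (U : List ℤ) (v : ℕ → ℝ) : ℕ → ℝ := fun i => v i + ((U.getD i 0 : ℤ) : ℝ)

/-- Timestamped traces of a guarded META, written in *reverse* chronological order
(the head of the list is the last state together with its absolute time).  Each step
consists of a delay (during which all intermediate states must be valid) followed by
the firing of an edge whose guard holds. -/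
inductive Trace (A : GMETA) : List (EState × ℝ) → Prop where
  | init :
      validState A initState →
      Trace A [(initState, 0)]
  | step {tr : List (EState × ℝ)} {l : ℕ} {w v : ℕ → ℝ} {τ : ℝ} (t : ℝ) (e : Edge) :
      Trace A (((l, w, v), τ) :: tr) →
      0 ≤ t →
      (∀ t', 0 ≤ t' → t' ≤ t →
        validState A (l, elapseClocks w t', elapseEnergies A l v t')) →
      e ∈ edges A →
      edgeSrc e = l →
      satIneqs A (elapseClocks w t) (elapseEnergies A l v t) (edgeGuard e) →
      validState A (edgeTgt e, resetClocks (edgeResets e) (elapseClocks w t),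
        updateEnergies (edgeUpdates e) (elapseEnergies A l v t)) →
      Trace A (((edgeTgt e, resetClocks (edgeResets e) (elapseClocks w t),
        updateEnergies (edgeUpdates e) (elapseEnergies A l v t)), τ + t)
          :: ((l, w, v), τ) :: tr)

/-- Duration of a run (absolute time of its last state). -/
def runDur (tr : List (EState × ℝ)) : ℝ := tr.headI.2

/-- Last location of a run. -/
def runLoc (tr : List (EState × ℝ)) : ℕ := tr.headI.1.1

/-- Final energies of a run. -/
def runEnergy (tr : List (EState × ℝ)) : ℕ → ℝ := tr.headI.1.2.2

/-- A private run: reaches a final location after having visited a private location. -/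
def PrivRun (A : GMETA) (tr : List (EState × ℝ)) : Prop :=
  Trace A tr ∧ runLoc tr ∈ finalLocs A ∧ ∃ p ∈ tr, p.1.1 ∈ privLocs A

/-- A public run: reaches a final location without ever visiting a private location. -/
def PubRun (A : GMETA) (tr : List (EState × ℝ)) : Prop :=
  Trace A tr ∧ runLoc tr ∈ finalLocs A ∧ ∀ p ∈ tr, p.1.1 ∉ privLocs A

/-- Final energies of private runs. -/
def EVpriv (A : GMETA) : Set (ℕ → ℝ) := {v | ∃ tr, PrivRun A tr ∧ runEnergy tr = v}

/-- Final energies of public runs. -/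
def EVpub (A : GMETA) : Set (ℕ → ℝ) := {v | ∃ tr, PubRun A tr ∧ runEnergy tr = v}

/-- Durations of private runs. -/
def DTpriv (A : GMETA) : Set ℝ := {d | ∃ tr, PrivRun A tr ∧ runDur tr = d}

/-- Durations of public runs. -/
def DTpub (A : GMETA) : Set ℝ := {d | ∃ tr, PubRun A tr ∧ runDur tr = d}

/-- Pairs (duration, final energies) of private runs. -/
def DEVpriv (A : GMETA) : Set (ℝ × (ℕ → ℝ)) :=
  {p | ∃ tr, PrivRun A tr ∧ runDur tr = p.1 ∧ runEnergy tr = p.2}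

/-- Pairs (duration, final energies) of public runs. -/
def DEVpub (A : GMETA) : Set (ℝ × (ℕ → ℝ)) :=
  {p | ∃ tr, PubRun A tr ∧ runDur tr = p.1 ∧ runEnergy tr = p.2}

/-- The three variants of opacity: existential, weak, full. -/
inductive Var3 where
  | ex : Var3
  | weak : Var3
  | full : Var3

/-- δ-EN-opacity. -/
def ENOpaque : Var3 → GMETA → Prop
  | .ex, A => (EVpriv A ∩ EVpub A).Nonempty
  | .weak, A => EVpriv A ⊆ EVpub A
  | .full, A => EVpriv A = EVpub A

/-- δ-ET-EN-opacity. -/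
def ETENOpaque : Var3 → GMETA → Prop
  | .ex, A => (DEVpriv A ∩ DEVpub A).Nonempty
  | .weak, A => DEVpriv A ⊆ DEVpub A
  | .full, A => DEVpriv A = DEVpub A

/-- The two observation kinds: final energies only (EN), or duration and final
energies (ET-EN). -/
inductive Sig2 where
  | en : Sig2
  | eten : Sig2

/-- δ-σ-opacity. -/
def Opq : Var3 → Sig2 → GMETA → Prop
  | δ, .en, A => ENOpaque δ A
  | δ, .eten, A => ETENOpaque δ A

/-- Energy level of a (reverse chronological) run at absolute time `t`: the energy
valuation of the last state reached at absolute time at most `t` (the zero valuation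
if there is no such state). -/
noncomputable def ELat : List (EState × ℝ) → ℝ → (ℕ → ℝ)
  | [], _ => fun _ => 0
  | p :: rest, t => if p.2 ≤ t then p.1.2.2 else ELat rest t

/-- Discrete energy observation: energy levels at times `1, …, ⌈duration⌉`. -/
noncomputable def DEO (tr : List (EState × ℝ)) : List (ℕ → ℝ) :=
  (List.range (Nat.ceil (runDur tr))).map (fun k => ELat tr ((k : ℝ) + 1))

/-- δ-DE-opacity. -/
def DEOpaque : Var3 → GMETA → Prop
  | .ex, A => ∃ tr tr', PrivRun A tr ∧ PubRun A tr' ∧ DEO tr = DEO tr'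
  | .weak, A => ∀ tr, PrivRun A tr → ∃ tr', PubRun A tr' ∧ DEO tr = DEO tr'
  | .full, A => (∀ tr, PrivRun A tr → ∃ tr', PubRun A tr' ∧ DEO tr = DEO tr') ∧
      (∀ tr, PubRun A tr → ∃ tr', PrivRun A tr' ∧ DEO tr' = DEO tr)

/-- Keeps, from a chronological sequence of timestamped energy valuations, exactly the
valuations that change at least one energy variable (w.r.t.\ the previous valuation,
given as first argument). -/
noncomputable def energyChangesAux : (ℕ → ℝ) → List ((ℕ → ℝ) × ℝ) → List ((ℕ → ℝ) × ℝ)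
  | _, [] => []
  | prev, p :: rest =>
      if p.1 = prev then energyChangesAux prev rest else p :: energyChangesAux p.1 rest

/-- Timestamped energy changes of a run, in chronological order. -/
noncomputable def energyChanges (tr : List (EState × ℝ)) : List ((ℕ → ℝ) × ℝ) :=
  energyChangesAux (fun _ => 0) (tr.reverse.map (fun p => (p.1.2.2, p.2)))

/-- Buffered energy level at integer time `τ ≥ 1`: the sequence of successive energy
valuations taken at absolute timestamps in `(τ − 1, τ]` (in `[0, 1]` for `τ = 1`),
keeping only the valuations that change at least one energy variable. -/
noncomputable def bEL (tr : List (EState × ℝ)) (τ : ℕ) : List (ℕ → ℝ) :=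
  ((energyChanges tr).filter
    (fun p => decide ((τ = 1 ∨ (τ : ℝ) - 1 < p.2) ∧ p.2 ≤ (τ : ℝ)))).map Prod.fst

/-- Buffered discrete energy observation: `bEL` at times `1, …, ⌈duration⌉`. -/
noncomputable def bDEO (tr : List (EState × ℝ)) : List (List (ℕ → ℝ)) :=
  (List.range (Nat.ceil (runDur tr))).map (fun k => bEL tr (k + 1))

/-- δ-bDE-opacity. -/
def bDEOpaque : Var3 → GMETA → Prop
  | .ex, A => ∃ tr tr', PrivRun A tr ∧ PubRun A tr' ∧ bDEO tr = bDEO tr'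
  | .weak, A => ∀ tr, PrivRun A tr → ∃ tr', PubRun A tr' ∧ bDEO tr = bDEO tr'
  | .full, A => (∀ tr, PrivRun A tr → ∃ tr', PubRun A tr' ∧ bDEO tr = bDEO tr') ∧
      (∀ tr, PubRun A tr → ∃ tr', PrivRun A tr' ∧ bDEO tr' = bDEO tr)

/-- Basic well-formedness of the presentation: the initial location exists, private and
final locations are non-empty sets of locations, final locations are not private and
have no outgoing edge, invariant and rate lists have the right lengths, and all indices
are in range. -/
def WellFormed (A : GMETA) : Prop :=
  0 < numLoc A ∧
  privLocs A ≠ [] ∧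
  finalLocs A ≠ [] ∧
  (∀ l ∈ privLocs A, l < numLoc A) ∧
  (∀ l ∈ finalLocs A, l < numLoc A ∧ l ∉ privLocs A) ∧
  (invs A).length = numLoc A ∧
  (∀ g ∈ invs A, ∀ q ∈ g, q.1 < numClk A + numEn A) ∧
  (rates A).length = numLoc A ∧
  (∀ r ∈ rates A, r.length = numEn A) ∧
  (∀ e ∈ edges A, edgeSrc e < numLoc A ∧ edgeTgt e < numLoc A ∧
    edgeSrc e ∉ finalLocs A ∧
    (∀ a, edgeAct e = some a → a < numAct A) ∧
    (∀ q ∈ edgeGuard e, q.1 < numClk A + numEn A) ∧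
    (∀ x ∈ edgeResets e, x < numClk A) ∧
    (edgeUpdates e).length = numEn A)

/-- Discrete: all energy rates are `0` (energy changes only via edge updates). -/
def Discrete (A : GMETA) : Prop := ∀ r ∈ rates A, ∀ z ∈ r, z = 0

/-- Positive: all energy rates and all energy updates are non-negative. -/
def Positive (A : GMETA) : Prop :=
  (∀ r ∈ rates A, ∀ z ∈ r, 0 ≤ z) ∧ ∀ e ∈ edges A, ∀ z ∈ edgeUpdates e, 0 ≤ z

/-- META (as opposed to *guarded* META): guards and invariants constrain clocks only. -/
def ClockGuardsOnly (A : GMETA) : Prop :=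
  (∀ g ∈ invs A, ∀ q ∈ g, q.1 < numClk A) ∧
    ∀ e ∈ edges A, ∀ q ∈ edgeGuard e, q.1 < numClk A

/-- Integer-switching: along every run, any edge whose target location has a different
energy rate than its source (for some energy variable) is taken at an integer absolute
time. -/
def IntegerSwitching (A : GMETA) : Prop :=
  ∀ (s' : EState) (τ' : ℝ) (s : EState) (τ : ℝ) (rest : List (EState × ℝ)),
    Trace A ((s', τ') :: (s, τ) :: rest) →
    (∃ i < numEn A, rateOf A s.1 i ≠ rateOf A s'.1 i) →
    ∃ n : ℕ, τ' = (n : ℝ)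

/-- Integer execution-time: every run reaching a final location has integer duration. -/
def IntegerET (A : GMETA) : Prop :=
  ∀ tr, Trace A tr → runLoc tr ∈ finalLocs A → ∃ n : ℕ, runDur tr = (n : ℝ)

/-- Some run of `A` reaches a state with location `l`. -/
def ReachLoc (A : GMETA) (l : ℕ) : Prop :=
  ∃ tr p, Trace A tr ∧ p ∈ tr ∧ p.1.1 = l

/-- Some run of `A` of duration exactly `T` ends in location `l`. -/
def ReachLocInTime (A : GMETA) (l : ℕ) (T : ℕ) : Prop :=
  ∃ tr, Trace A tr ∧ runLoc tr = l ∧ runDur tr = (T : ℝ)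

/-- A problem `P` over guarded METAs is decidable on the class `C` when some computable
(Boolean-valued, hence total) function decides it on every automaton of the class. -/
def DecidableOn (C P : GMETA → Prop) : Prop :=
  ∃ f : GMETA → Bool, Computable f ∧ ∀ A, C A → (f A = true ↔ P A)


/-! ### Space-bounded decidability, via Turing machines -/

/-- Binary presentation of a guarded META on the tape alphabet `Option Bool`. -/
def tapeInput (A : GMETA) : List (Option Bool) := (Nat.bits (Encodable.encode A)).map some

/-- One-step relation of a (deterministic) Turing machine. -/
def TMStep {Λ : Type} [Inhabited Λ]
    (M : Turing.TM0.Machine (Option Bool) Λ) (a b : Turing.TM0.Cfg (Option Bool) Λ) : Prop :=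
  Turing.TM0.step M a = some b

/-- `P` is decided on the class `C` by a Turing machine using at most `S n` tape cells
on inputs of length `n`: on every input of the class the machine halts, the halting
configuration reads `some true` at the head iff `P` holds, and every reachable
configuration is blank except within distance `S n` of the head. -/
def DecidesInSpace (S : ℕ → ℕ) (C P : GMETA → Prop) : Prop :=
  ∃ (Λ : Type) (_ : Inhabited Λ) (_ : Fintype Λ),
  ∃ M : Turing.TM0.Machine (Option Bool) Λ,
    ∀ A : GMETA, C A →
      (∃ c, Relation.ReflTransGen (TMStep M) (Turing.TM0.init (tapeInput A)) c ∧
        Turing.TM0.step M c = none ∧ (c.Tape.head = some true ↔ P A)) ∧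
      ∀ c, Relation.ReflTransGen (TMStep M) (Turing.TM0.init (tapeInput A)) c →
        ∀ i : ℤ, (S (tapeInput A).length : ℤ) < |i| → c.Tape.nth i = none

/-- Membership in `EXPSPACE`, relative to the class `C`. -/
def InEXPSPACEOn (C P : GMETA → Prop) : Prop :=
  ∃ k : ℕ, DecidesInSpace (fun n => 2 ^ (n ^ k + k)) C P

/-- Membership in `2EXPSPACE`, relative to the class `C`. -/
def In2EXPSPACEOn (C P : GMETA → Prop) : Prop :=
  ∃ k : ℕ, DecidesInSpace (fun n => 2 ^ 2 ^ (n ^ k + k)) C P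

/-- Membership in `3EXPSPACE`, relative to the class `C`. -/
def In3EXPSPACEOn (C P : GMETA → Prop) : Prop :=
  ∃ k : ℕ, DecidesInSpace (fun n => 2 ^ 2 ^ 2 ^ (n ^ k + k)) C P


/-!
In the gadget every run reaching the final location passes through the pump location, whose
zero-delay self-loops add `±1` to any single energy variable; from there every vector of natural
energies can be produced from every other. Private runs enter the pump location from the fresh
initial location with zero energies, so their final energies are exactly the natural vectors (no
others occur, the gadget being discrete with integer updates). Public runs can only enter it
from the copy of `lf`, so they exist iff `lf` is reachable in `A`, and then their final energies
are again all natural vectors. Hence the two sets of final energies are equal and nonempty when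
`lf` is reachable, and the public one is empty otherwise, which settles all three variants.
-/

/-! ### Runs of an arbitrary guarded META -/

section Runs

variable {B : GMETA} {tr rest : List (EState × ℝ)} {l : ℕ} {w w' v : ℕ → ℝ} {τ : ℝ}

theorem WellFormed.length_invs (hWF : WellFormed B) : (invs B).length = numLoc B :=
  hWF.2.2.2.2.2.1

theorem WellFormed.length_rates (hWF : WellFormed B) : (rates B).length = numLoc B :=
  hWF.2.2.2.2.2.2.2.1

theorem WellFormed.edgeSrc_lt (hWF : WellFormed B) {e : Edge} (he : e ∈ edges B) :
    edgeSrc e < numLoc B :=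
  (hWF.2.2.2.2.2.2.2.2.2 e he).1

theorem WellFormed.edgeTgt_lt (hWF : WellFormed B) {e : Edge} (he : e ∈ edges B) :
    edgeTgt e < numLoc B :=
  (hWF.2.2.2.2.2.2.2.2.2 e he).2.1

theorem WellFormed.length_edgeUpdates (hWF : WellFormed B) {e : Edge} (he : e ∈ edges B) :
    (edgeUpdates e).length = numEn B :=
  (hWF.2.2.2.2.2.2.2.2.2 e he).2.2.2.2.2.2

theorem Trace.validState_head {s : EState} (h : Trace B ((s, τ) :: rest)) : validState B s := by
  cases h with
  | init h₀ => exact h₀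
  | step _ _ _ _ _ _ _ _ hval => exact hval

theorem Trace.of_mem (h : Trace B tr) {p : EState × ℝ} (hp : p ∈ tr) :
    ∃ rest, Trace B (p :: rest) := by
  induction h with
  | init h₀ => exact ⟨[], by rw [List.mem_singleton.1 hp]; exact .init h₀⟩
  | step t e htr ht hmid he hsrc hg hval ih =>
    rcases List.mem_cons.1 hp with rfl | hp
    · exact ⟨_, .step t e htr ht hmid he hsrc hg hval⟩
    · exact ih hp

theorem Trace.loc_lt (h : Trace B tr) {p : EState × ℝ} (hp : p ∈ tr) : p.1.1 < numLoc B := by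
  obtain ⟨_, h'⟩ := h.of_mem hp
  exact h'.validState_head.1

@[simp] theorem elapseClocks_zero : elapseClocks w 0 = w := by
  funext i; simp [elapseClocks]

@[simp] theorem elapseEnergies_zero : elapseEnergies B l v 0 = v := by
  funext i; simp [elapseEnergies]

@[simp] theorem satIneqs_nil : satIneqs B w v [] := by
  simp [satIneqs]

theorem Trace.step_zero (h : Trace B (((l, w, v), τ) :: rest)) {e : Edge} (he : e ∈ edges B)
    (hsrc : edgeSrc e = l) (hg : satIneqs B w v (edgeGuard e))
    (hval : validState B
      (edgeTgt e, resetClocks (edgeResets e) w, updateEnergies (edgeUpdates e) v)) :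
    Trace B (((edgeTgt e, resetClocks (edgeResets e) w, updateEnergies (edgeUpdates e) v), τ)
      :: ((l, w, v), τ) :: rest) := by
  have hstep := Trace.step 0 e h le_rfl
    (fun t h₀ h₁ => by rw [le_antisymm h₁ h₀]; simpa using h.validState_head)
    he hsrc (by simpa using hg) (by simpa using hval)
  simpa using hstep

theorem elapseClocks_nonneg (hw : ∀ i, 0 ≤ w i) {t : ℝ} (ht : 0 ≤ t) (i : ℕ) :
    0 ≤ elapseClocks w t i :=
  add_nonneg (hw i) ht

theorem resetClocks_nonneg (hw : ∀ i, 0 ≤ w i) (R : List ℕ) (i : ℕ) :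
    0 ≤ resetClocks R w i := by
  unfold resetClocks
  split_ifs
  exacts [le_rfl, hw i]

theorem eqOn_elapseClocks {s : Set ℕ} (hw : Set.EqOn w w' s) (t : ℝ) :
    Set.EqOn (elapseClocks w t) (elapseClocks w' t) s :=
  fun i hi => by simp [elapseClocks, hw hi]

theorem eqOn_resetClocks {s : Set ℕ} (hw : Set.EqOn w w' s) (R : List ℕ) :
    Set.EqOn (resetClocks R w) (resetClocks R w') s :=
  fun i hi => by simp [resetClocks, hw hi]

theorem satIneqs_congr_clocks (hw : Set.EqOn w w' (Set.Iio (numClk B))) (g : List Ineq) :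
    satIneqs B w v g ↔ satIneqs B w' v g := by
  refine forall₂_congr fun q _ => ?_
  unfold varVal
  split_ifs with hq
  · rw [hw hq]
  · rfl

theorem validState_congr_clocks (hw : Set.EqOn w w' (Set.Iio (numClk B)))
    (hw₀ : ∀ i, 0 ≤ w i) (h : validState B (l, w', v)) : validState B (l, w, v) :=
  ⟨h.1, hw₀, h.2.2.1, (satIneqs_congr_clocks hw _).2 h.2.2.2⟩

theorem rateOf_of_discrete (hD : Discrete B) (l i : ℕ) : rateOf B l i = 0 := by
  simp only [rateOf, List.getD_eq_getElem?_getD]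
  rcases hr : (rates B)[l]? with _ | r
  · simp
  rcases hz : r[i]? with _ | z
  · simp [hz]
  simpa [hz] using hD r (List.mem_of_getElem? hr) z (List.mem_of_getElem? hz)

theorem elapseEnergies_of_discrete (hD : Discrete B) (t : ℝ) : elapseEnergies B l v t = v := by
  funext i; simp [elapseEnergies, rateOf_of_discrete hD]

def NatEnergies (n : ℕ) : Set (ℕ → ℝ) :=
  {v | (∀ i, ∃ k : ℕ, v i = k) ∧ ∀ i, n ≤ i → v i = 0}

theorem zero_mem_natEnergies (n : ℕ) : 0 ∈ NatEnergies n :=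
  ⟨fun _ => ⟨0, by simp⟩, fun _ _ => rfl⟩

theorem nonneg_of_mem_natEnergies {n : ℕ} (hv : v ∈ NatEnergies n) : 0 ≤ v := fun i => by
  obtain ⟨k, hk⟩ := hv.1 i
  simp [hk]

theorem updateEnergies_mem_natEnergies {n : ℕ} {U : List ℤ} (hU : U.length = n)
    (hv : v ∈ NatEnergies n) (hnn : ∀ i, 0 ≤ updateEnergies U v i) :
    updateEnergies U v ∈ NatEnergies n := by
  refine ⟨fun i => ?_, fun i hi => ?_⟩
  · obtain ⟨k, hk⟩ := hv.1 i
    have hnn' : (0 : ℤ) ≤ k + U.getD i 0 := by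
      have := hnn i
      rw [updateEnergies, hk] at this
      exact_mod_cast this
    refine ⟨(k + U.getD i 0).toNat, ?_⟩
    rw [updateEnergies, hk]
    exact_mod_cast (Int.toNat_of_nonneg hnn').symm
  · simp [updateEnergies, hv.2 i hi, List.getElem?_eq_none (hU ▸ hi : U.length ≤ i)]

theorem Trace.runEnergy_mem_natEnergies (hWF : WellFormed B) (hD : Discrete B)
    (h : Trace B tr) : runEnergy tr ∈ NatEnergies (numEn B) := by
  induction h with
  | init => exact ⟨fun _ => ⟨0, by simp [runEnergy, initState]⟩, fun _ _ => rfl⟩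
  | step t e _ _ _ he _ _ hval ih =>
    rw [elapseEnergies_of_discrete hD] at hval ⊢
    exact updateEnergies_mem_natEnergies (hWF.length_edgeUpdates he) ih hval.2.2.1

end Runs

def LoopReach (B : GMETA) (l : ℕ) (v u : ℕ → ℝ) : Prop :=
  ∀ w τ rest, Trace B (((l, w, v), τ) :: rest) →
    ∃ pre, (∀ p ∈ pre, p.1.1 = l) ∧ Trace B (((l, w, u), τ) :: (pre ++ rest))

theorem LoopReach.refl {B : GMETA} {l : ℕ} (v : ℕ → ℝ) : LoopReach B l v v :=
  fun _ _ _ h => ⟨[], by simp, h⟩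

theorem LoopReach.trans {B : GMETA} {l : ℕ} {u v x : ℕ → ℝ} (h₁ : LoopReach B l v u)
    (h₂ : LoopReach B l u x) : LoopReach B l v x := by
  intro w τ rest h
  obtain ⟨pre₁, hpre₁, h'⟩ := h₁ w τ rest h
  obtain ⟨pre₂, hpre₂, h''⟩ := h₂ w τ _ h'
  refine ⟨pre₂ ++ pre₁, fun p hp => ?_, by rwa [List.append_assoc]⟩
  rcases List.mem_append.1 hp with hp | hp
  exacts [hpre₂ p hp, hpre₁ p hp]

theorem ENOpaque_iff_of_EV (δ : Var3) {B : GMETA} {S : Set (ℕ → ℝ)} {P : Prop}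
    (hS : S.Nonempty) (hpriv : EVpriv B = S) (hpub : P → EVpub B = S)
    (hpub' : ¬P → EVpub B = ∅) : ENOpaque δ B ↔ P := by
  by_cases hP : P
  · cases δ <;> simp [ENOpaque, hpriv, hpub hP, hS, hP]
  · cases δ <;> simp [ENOpaque, hpriv, hpub' hP, hP, hS.ne_empty]

/-! ### The gadget -/

section Gadget

variable (A : GMETA) (lf : ℕ)

def privLoc : ℕ := numLoc A + 1
def pumpLoc : ℕ := numLoc A + 2
def finLoc : ℕ := numLoc A + 3

def zeroVec : List ℤ := List.replicate (numEn A) 0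

def unitVec (i : ℕ) (c : ℤ) : List ℤ := (zeroVec A).set i c

def shiftEdge (e : Edge) : Edge :=
  (edgeSrc e + 1, edgeGuard e, edgeAct e, edgeResets e, edgeUpdates e, edgeTgt e + 1)

def plainEdge (src : ℕ) (U : List ℤ) (tgt : ℕ) : Edge := (src, [], none, [], U, tgt)

def startEdge : Edge := (0, [], none, List.range (numClk A), zeroVec A, 1)

def pumpEdges : List Edge :=
  (List.range (numEn A)).flatMap fun i =>
    [plainEdge (pumpLoc A) (unitVec A i 1) (pumpLoc A),
      plainEdge (pumpLoc A) (unitVec A i (-1)) (pumpLoc A)]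

/-- Location `0` is a fresh initial location; `A` is shifted to locations `1, …, numLoc A` and
entered through `startEdge`. Both the private location and the copy of `lf` lead to the pump
location, which leads to the only final location. The fresh initial location keeps the private
run alive even when the initial state of `A` violates its invariant. -/
def gadget : GMETA :=
  (numAct A, numLoc A + 4, numClk A, numEn A, [privLoc A], [finLoc A],
    [] :: invs A ++ [[], [], []],
    zeroVec A :: rates A ++ [zeroVec A, zeroVec A, zeroVec A],
    (edges A).map shiftEdge ++
      [startEdge A, plainEdge 0 (zeroVec A) (privLoc A),
        plainEdge (privLoc A) (zeroVec A) (pumpLoc A),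
        plainEdge (lf + 1) (zeroVec A) (pumpLoc A),
        plainEdge (pumpLoc A) (zeroVec A) (finLoc A)] ++
      pumpEdges A)

@[simp] theorem numLoc_gadget : numLoc (gadget A lf) = numLoc A + 4 := rfl
@[simp] theorem numClk_gadget : numClk (gadget A lf) = numClk A := rfl
@[simp] theorem numEn_gadget : numEn (gadget A lf) = numEn A := rfl
@[simp] theorem privLocs_gadget : privLocs (gadget A lf) = [privLoc A] := rfl
@[simp] theorem finalLocs_gadget : finalLocs (gadget A lf) = [finLoc A] := rfl

theorem invs_gadget : invs (gadget A lf) = [] :: invs A ++ [[], [], []] := rfl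

theorem rates_gadget :
    rates (gadget A lf) = zeroVec A :: rates A ++ [zeroVec A, zeroVec A, zeroVec A] := rfl

theorem edges_gadget :
    edges (gadget A lf) = (edges A).map shiftEdge ++
      [startEdge A, plainEdge 0 (zeroVec A) (privLoc A),
        plainEdge (privLoc A) (zeroVec A) (pumpLoc A),
        plainEdge (lf + 1) (zeroVec A) (pumpLoc A),
        plainEdge (pumpLoc A) (zeroVec A) (finLoc A)] ++
      pumpEdges A := rfl

@[simp] theorem edgeSrc_shiftEdge (e : Edge) : edgeSrc (shiftEdge e) = edgeSrc e + 1 := rfl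
@[simp] theorem edgeGuard_shiftEdge (e : Edge) : edgeGuard (shiftEdge e) = edgeGuard e := rfl
@[simp] theorem edgeResets_shiftEdge (e : Edge) : edgeResets (shiftEdge e) = edgeResets e := rfl
@[simp] theorem edgeUpdates_shiftEdge (e : Edge) : edgeUpdates (shiftEdge e) = edgeUpdates e :=
  rfl
@[simp] theorem edgeTgt_shiftEdge (e : Edge) : edgeTgt (shiftEdge e) = edgeTgt e + 1 := rfl

section PlainEdge

variable {src tgt : ℕ} {U : List ℤ}

@[simp] theorem edgeSrc_plainEdge : edgeSrc (plainEdge src U tgt) = src := rfl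
@[simp] theorem edgeGuard_plainEdge : edgeGuard (plainEdge src U tgt) = [] := rfl
@[simp] theorem edgeAct_plainEdge : edgeAct (plainEdge src U tgt) = none := rfl
@[simp] theorem edgeResets_plainEdge : edgeResets (plainEdge src U tgt) = [] := rfl
@[simp] theorem edgeUpdates_plainEdge : edgeUpdates (plainEdge src U tgt) = U := rfl
@[simp] theorem edgeTgt_plainEdge : edgeTgt (plainEdge src U tgt) = tgt := rfl

end PlainEdge

@[simp] theorem length_zeroVec : (zeroVec A).length = numEn A := List.length_replicate

@[simp] theorem length_unitVec (i : ℕ) (c : ℤ) : (unitVec A i c).length = numEn A := by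
  simp [unitVec]

theorem getD_zeroVec (i : ℕ) : (zeroVec A).getD i 0 = 0 := by
  simp [zeroVec, List.getD_eq_getElem?_getD]

theorem getD_unitVec {i : ℕ} (hi : i < numEn A) (c : ℤ) (j : ℕ) :
    (unitVec A i c).getD j 0 = (Pi.single i c : ℕ → ℤ) j := by
  rcases eq_or_ne j i with rfl | hji
  · simp [unitVec, List.getD_eq_getElem?_getD, hi]
  · simp [unitVec, zeroVec, List.getD_eq_getElem?_getD, hji, hji.symm]

theorem mem_edges_gadget {e : Edge} (he : e ∈ edges (gadget A lf)) :
    (∃ e₀ ∈ edges A, e = shiftEdge e₀) ∨ e = startEdge A ∨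
      ∃ src U tgt, e = plainEdge src U tgt ∧ U.length = numEn A ∧
        (src = 0 ∧ tgt = privLoc A ∨
          (tgt = pumpLoc A ∨ tgt = finLoc A) ∧
            (src = privLoc A ∨ src = lf + 1 ∨ src = pumpLoc A)) := by
  simp only [edges_gadget, pumpEdges, List.mem_append, List.mem_map, List.mem_cons,
    List.mem_flatMap, List.mem_range, List.not_mem_nil, or_false] at he
  rcases he with ((⟨e₀, he₀, rfl⟩ | rfl | rfl | rfl | rfl | rfl) | ⟨i, hi, rfl | rfl⟩)
  · exact Or.inl ⟨e₀, he₀, rfl⟩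
  · exact Or.inr (Or.inl rfl)
  all_goals
    refine Or.inr (Or.inr ⟨_, _, _, rfl, by simp, ?_⟩)
    simp [privLoc, pumpLoc, finLoc]

end Gadget

section GadgetStructure

variable {A : GMETA} {lf : ℕ}

theorem discrete_gadget (hD : Discrete A) : Discrete (gadget A lf) := by
  simp only [Discrete, rates_gadget, List.cons_append, List.mem_cons, List.mem_append,
    List.not_mem_nil, or_false]
  rintro r (rfl | hr | rfl | rfl | rfl) z hz
  all_goals first | exact hD r hr z hz | exact List.eq_of_mem_replicate hz

theorem clockGuardsOnly_gadget (hCG : ClockGuardsOnly A) : ClockGuardsOnly (gadget A lf) := by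
  refine ⟨?_, fun e he q hq => ?_⟩
  · simp only [invs_gadget, List.cons_append, List.mem_cons, List.mem_append,
      List.not_mem_nil, or_false]
    rintro g (rfl | hg | rfl | rfl | rfl) q hq
    all_goals first | exact hCG.1 g hg q hq | simp at hq
  · rcases mem_edges_gadget A lf he with ⟨e₀, he₀, rfl⟩ | rfl | ⟨_, _, _, rfl, -⟩
    · exact hCG.2 e₀ he₀ q hq
    · simp [startEdge, edgeGuard] at hq
    · simp at hq

theorem wellFormed_gadget (hWF : WellFormed A) (hlf : lf < numLoc A) :
    WellFormed (gadget A lf) := by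
  obtain ⟨-, -, -, -, -, hinv, hinvq, hrates, hrates', hedges⟩ := hWF
  refine ⟨by simp, by simp, by simp, by simp [privLoc], by simp [privLoc, finLoc],
    by simp [invs_gadget, hinv], ?_, by simp [rates_gadget, hrates], ?_, fun e he => ?_⟩
  · simp only [invs_gadget, List.cons_append, List.mem_cons, List.mem_append,
      List.not_mem_nil, or_false]
    rintro g (rfl | hg | rfl | rfl | rfl) q hq
    all_goals first | exact hinvq g hg q hq | simp at hq
  · simp only [rates_gadget, List.cons_append, List.mem_cons, List.mem_append,
      List.not_mem_nil, or_false]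
    rintro r (rfl | hr | rfl | rfl | rfl)
    all_goals first | exact hrates' r hr | simp
  · rcases mem_edges_gadget A lf he with ⟨e₀, he₀, rfl⟩ | rfl | ⟨src, U, tgt, rfl, hU, hst⟩
    · obtain ⟨hs, ht, -, hact, hg, hres, hupd⟩ := hedges e₀ he₀
      exact ⟨by simp; omega, by simp; omega, by simp [finLoc]; omega, hact, hg, hres, hupd⟩
    · refine ⟨by simp [startEdge, edgeSrc], by simp [startEdge, edgeTgt], ?_, ?_, ?_, ?_, ?_⟩ <;>
        simp [startEdge, edgeSrc, edgeAct, edgeGuard, edgeResets, edgeUpdates, finLoc]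
    · simp only [privLoc, pumpLoc, finLoc] at hst
      exact ⟨by simp; omega, by simp; omega, by simp [finLoc]; omega, by simp, by simp, by simp,
        by simpa using hU⟩

theorem edgeTgt_gadget_ne_zero {e : Edge} (he : e ∈ edges (gadget A lf)) : edgeTgt e ≠ 0 := by
  rcases mem_edges_gadget A lf he with ⟨e₀, -, rfl⟩ | rfl | ⟨_, _, tgt, rfl, -, hst⟩
  · simp
  · simp [startEdge, edgeTgt]
  · simp only [privLoc, pumpLoc, finLoc] at hst
    simp
    omega

theorem eq_shiftEdge_or_startEdge {e : Edge} (he : e ∈ edges (gadget A lf))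
    (hle : edgeTgt e ≤ numLoc A) : (∃ e₀ ∈ edges A, e = shiftEdge e₀) ∨ e = startEdge A := by
  rcases mem_edges_gadget A lf he with h | h | ⟨_, _, tgt, rfl, -, hst⟩
  · exact Or.inl h
  · exact Or.inr h
  · simp only [privLoc, pumpLoc, finLoc] at hst
    simp at hle
    omega

theorem edgeSrc_of_pumpLoc_le (hWF : WellFormed A) {e : Edge} (he : e ∈ edges (gadget A lf))
    (hle : pumpLoc A ≤ edgeTgt e) :
    edgeSrc e = privLoc A ∨ edgeSrc e = lf + 1 ∨ edgeSrc e = pumpLoc A := by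
  rcases mem_edges_gadget A lf he with ⟨e₀, he₀, rfl⟩ | rfl | ⟨_, _, tgt, rfl, -, hst⟩
  · have := hWF.edgeTgt_lt he₀
    simp [pumpLoc] at hle
    omega
  · simp [startEdge, edgeTgt, pumpLoc] at hle
  · simp only [edgeSrc_plainEdge, edgeTgt_plainEdge] at hle ⊢
    simp only [privLoc, pumpLoc, finLoc] at hst hle ⊢
    omega

end GadgetStructure

section Computability

open Primrec

theorem primrec_zeroVec : Primrec zeroVec :=
  (list_map list_range (const (0 : ℤ)).to₂).comp (fst.comp (snd.comp (snd.comp snd)))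
    |>.of_eq fun A => by simp [zeroVec, numEn, List.map_const']

theorem primrec_shiftEdge : Primrec shiftEdge :=
  (succ.comp fst).pair (fst.comp snd |>.pair (fst.comp (snd.comp snd) |>.pair
    (fst.comp (snd.comp (snd.comp snd)) |>.pair (fst.comp (snd.comp (snd.comp (snd.comp snd)))
      |>.pair (succ.comp (snd.comp (snd.comp (snd.comp (snd.comp snd)))))))))

theorem primrec_plainEdge {α : Type*} [Primcodable α] {src tgt : α → ℕ} {U : α → List ℤ}
    (hsrc : Primrec src) (hU : Primrec U) (htgt : Primrec tgt) :
    Primrec fun a => plainEdge (src a) (U a) (tgt a) :=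
  hsrc.pair ((const []).pair ((const none).pair ((const []).pair (hU.pair htgt))))

theorem primrec_gadget : Primrec fun p : GMETA × ℕ => gadget p.1 p.2 := by
  have hLoc : Primrec fun p : GMETA × ℕ => numLoc p.1 := fst.comp (snd.comp fst)
  have hClk : Primrec fun p : GMETA × ℕ => numClk p.1 := fst.comp (snd.comp (snd.comp fst))
  have hEn : Primrec fun p : GMETA × ℕ => numEn p.1 :=
    fst.comp (snd.comp (snd.comp (snd.comp fst)))
  have hInvs : Primrec fun p : GMETA × ℕ => invs p.1 :=
    fst.comp (snd.comp (snd.comp (snd.comp (snd.comp (snd.comp (snd.comp fst))))))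
  have hRates : Primrec fun p : GMETA × ℕ => rates p.1 :=
    fst.comp (snd.comp (snd.comp (snd.comp (snd.comp (snd.comp (snd.comp (snd.comp fst)))))))
  have hEdges : Primrec fun p : GMETA × ℕ => edges p.1 :=
    snd.comp (snd.comp (snd.comp (snd.comp (snd.comp (snd.comp (snd.comp (snd.comp fst)))))))
  have hLoc' : ∀ k, Primrec fun p : GMETA × ℕ => numLoc p.1 + k := fun k =>
    nat_add.comp hLoc (const k)
  have hZero : Primrec fun p : GMETA × ℕ => zeroVec p.1 := primrec_zeroVec.comp fst
  have hStart : Primrec fun p : GMETA × ℕ => startEdge p.1 :=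
    (const 0).pair ((const []).pair ((const none).pair ((list_range.comp hClk).pair
      (hZero.pair (const 1)))))
  have hUnit : ∀ c : ℤ, Primrec₂ fun (p : GMETA × ℕ) (i : ℕ) =>
      plainEdge (pumpLoc p.1) (unitVec p.1 i c) (pumpLoc p.1) := fun c =>
    (primrec_plainEdge ((hLoc' 2).comp fst)
      (list_set.comp (hZero.comp fst) (snd.pair (const c))) ((hLoc' 2).comp fst)).to₂
  have hPump : Primrec fun p : GMETA × ℕ => pumpEdges p.1 :=
    list_flatMap (list_range.comp hEn)
      (list_cons.comp₂ (hUnit 1) (list_cons.comp₂ (hUnit (-1)) (const []).to₂))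
  have hPlain : ∀ {src tgt : GMETA × ℕ → ℕ}, Primrec src → Primrec tgt →
      Primrec fun p => plainEdge (src p) (zeroVec p.1) (tgt p) :=
    fun hs ht => primrec_plainEdge hs hZero ht
  exact (fst.comp fst).pair ((hLoc' 4).pair (hClk.pair (hEn.pair
    ((list_cons.comp (hLoc' 1) (const [])).pair ((list_cons.comp (hLoc' 3) (const [])).pair
    ((list_append.comp (list_cons.comp (const []) hInvs) (const [[], [], []])).pair
    ((list_append.comp (list_cons.comp hZero hRates)
      (list_cons.comp hZero (list_cons.comp hZero (list_cons.comp hZero (const []))))).pair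
    (list_append.comp (list_append.comp (list_map hEdges (primrec_shiftEdge.comp snd).to₂)
      (list_cons.comp hStart (list_cons.comp (hPlain (const 0) (hLoc' 1))
        (list_cons.comp (hPlain (hLoc' 1) (hLoc' 2))
        (list_cons.comp (hPlain (succ.comp snd) (hLoc' 2))
        (list_cons.comp (hPlain (hLoc' 2) (hLoc' 3)) (const []))))))) hPump))))))))

end Computability

/-! ### Runs of the gadget -/

section GadgetRuns

variable {A : GMETA} {lf : ℕ} {tr rest : List (EState × ℝ)} {l : ℕ} {w w' v : ℕ → ℝ} {τ : ℝ}

theorem invOf_gadget_succ (hWF : WellFormed A) (hl : l < numLoc A) :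
    invOf (gadget A lf) (l + 1) = invOf A l := by
  rw [invOf, invOf, invs_gadget, List.cons_append, List.getD_cons_succ,
    List.getD_append _ _ _ _ (by rw [hWF.length_invs]; exact hl)]

theorem invOf_gadget_of_lt (hWF : WellFormed A) (hl : numLoc A < l) :
    invOf (gadget A lf) l = [] := by
  obtain ⟨l, rfl⟩ := Nat.exists_eq_add_of_lt hl
  rw [invOf, invs_gadget, List.cons_append, List.getD_cons_succ,
    List.getD_append_right _ _ _ _ (by rw [hWF.length_invs]; omega)]
  rw [show ([[], [], []] : List (List Ineq)) = List.replicate 3 [] from rfl,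
    List.getD_eq_getElem?_getD, List.getElem?_getD_replicate_default_eq]

theorem rateOf_gadget_succ (hWF : WellFormed A) (hl : l < numLoc A) (i : ℕ) :
    rateOf (gadget A lf) (l + 1) i = rateOf A l i := by
  rw [rateOf, rateOf, rates_gadget, List.cons_append, List.getD_cons_succ,
    List.getD_append _ _ _ _ (by rw [hWF.length_rates]; exact hl)]

theorem elapseEnergies_gadget_zero (t : ℝ) : elapseEnergies (gadget A lf) 0 v t = v := by
  funext i; simp [elapseEnergies, show rateOf (gadget A lf) 0 i = 0 from getD_zeroVec A i]

theorem elapseEnergies_gadget_succ (hWF : WellFormed A) (hl : l < numLoc A) (t : ℝ) :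
    elapseEnergies (gadget A lf) (l + 1) v t = elapseEnergies A l v t := by
  funext i; simp [elapseEnergies, rateOf_gadget_succ hWF hl]

theorem updateEnergies_zeroVec : updateEnergies (zeroVec A) v = v := by
  funext i
  simp only [updateEnergies, getD_zeroVec, Int.cast_zero, add_zero]

theorem updateEnergies_unitVec {i : ℕ} (hi : i < numEn A) (c : ℤ) :
    updateEnergies (unitVec A i c) v = v + Pi.single i (c : ℝ) := by
  funext j
  simp only [updateEnergies, getD_unitVec A hi, Pi.add_apply]
  rcases eq_or_ne j i with rfl | hji <;> simp [*]

theorem validState_gadget_zero : validState (gadget A lf) initState :=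
  ⟨by simp [initState], fun _ => le_rfl, fun _ => le_rfl, satIneqs_nil⟩

theorem validState_gadget_succ_iff (hWF : WellFormed A) (hl : l < numLoc A) :
    validState (gadget A lf) (l + 1, w, v) ↔ validState A (l, w, v) := by
  simp only [validState, numLoc_gadget, invOf_gadget_succ hWF hl]
  exact ⟨fun h => ⟨hl, h.2⟩, fun h => ⟨by omega, h.2⟩⟩

theorem validState_gadget_of_lt (hWF : WellFormed A) (hl : numLoc A < l)
    (hl₄ : l < numLoc A + 4) (hw : ∀ i, 0 ≤ w i) (hv : ∀ i, 0 ≤ v i) :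
    validState (gadget A lf) (l, w, v) := by
  refine ⟨by simpa using hl₄, hw, hv, ?_⟩
  rw [invOf_gadget_of_lt hWF hl]
  exact satIneqs_nil

theorem Trace.gadget_plainEdge_step (hWF : WellFormed A)
    (h : Trace (gadget A lf) (((l, w, v), τ) :: rest)) {U : List ℤ} {l' : ℕ}
    (he : plainEdge l U l' ∈ edges (gadget A lf)) (hl' : numLoc A < l')
    (hl'₄ : l' < numLoc A + 4) (hU : ∀ i, 0 ≤ updateEnergies U v i) :
    Trace (gadget A lf) (((l', w, updateEnergies U v), τ) :: ((l, w, v), τ) :: rest) :=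
  h.step_zero he rfl satIneqs_nil
    (validState_gadget_of_lt hWF hl' hl'₄ h.validState_head.2.1 hU)

theorem Trace.gadget_move (hWF : WellFormed A)
    (h : Trace (gadget A lf) (((l, w, v), τ) :: rest)) {l' : ℕ}
    (he : plainEdge l (zeroVec A) l' ∈ edges (gadget A lf)) (hl' : numLoc A < l')
    (hl'₄ : l' < numLoc A + 4) :
    Trace (gadget A lf) (((l', w, v), τ) :: ((l, w, v), τ) :: rest) := by
  simpa [updateEnergies_zeroVec] using h.gadget_plainEdge_step hWF he hl' hl'₄
    (by simpa [updateEnergies_zeroVec] using h.validState_head.2.2.1)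

def shiftState (p : EState × ℝ) : EState × ℝ := ((p.1.1 + 1, p.1.2.1, p.1.2.2), p.2)

theorem Trace.to_gadget (hWF : WellFormed A) (h : Trace A tr) :
    Trace (gadget A lf) (tr.map shiftState ++ [(initState, 0)]) := by
  induction h with
  | init h₀ =>
    have hreset : resetClocks (List.range (numClk A)) (fun _ => (0 : ℝ)) = fun _ => 0 := by
      funext i; simp [resetClocks]
    have h₁ : validState (gadget A lf) (0 + 1, fun _ => 0, fun _ => 0) :=
      (validState_gadget_succ_iff hWF hWF.1).2 h₀
    have hstart := (Trace.init (validState_gadget_zero (A := A) (lf := lf))).step_zero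
      (e := startEdge A) (by simp [edges_gadget]) rfl satIneqs_nil
      (by simpa [startEdge, edgeTgt, edgeResets, edgeUpdates, hreset, updateEnergies_zeroVec])
    simpa [startEdge, edgeTgt, edgeResets, edgeUpdates, hreset, updateEnergies_zeroVec,
      shiftState, initState] using hstart
  | @step tr l w v τ t e _ ht hmid he hsrc hg hval ih =>
    subst hsrc
    have hl : edgeSrc e < numLoc A := (hmid 0 le_rfl ht).1
    have hl' : edgeTgt e < numLoc A := hval.1
    have ih' : Trace (gadget A lf)
        (((edgeSrc e + 1, w, v), τ) :: (tr.map shiftState ++ [(initState, 0)])) := ih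
    have hstep := Trace.step t (shiftEdge e) ih' ht
      (fun t' h₀ h₁ => by
        rw [elapseEnergies_gadget_succ hWF hl]
        exact (validState_gadget_succ_iff hWF hl).2 (hmid t' h₀ h₁))
      (List.mem_append_left _ (List.mem_append_left _ (List.mem_map_of_mem he))) rfl
      (by rwa [elapseEnergies_gadget_succ hWF hl])
      (by rwa [elapseEnergies_gadget_succ hWF hl, edgeTgt_shiftEdge,
        validState_gadget_succ_iff hWF hl'])
    rwa [elapseEnergies_gadget_succ hWF hl] at hstep

theorem Trace.energy_eq_zero_of_gadget_loc_zero
    (h : Trace (gadget A lf) (((0, w, v), τ) :: rest)) : v = fun _ => 0 := by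
  generalize hs : (((0, w, v), τ) :: rest : List (EState × ℝ)) = tr at h
  cases h with
  | init => simp_all [initState]
  | step _ e _ _ _ he =>
    simp only [List.cons.injEq, Prod.mk.injEq] at hs
    exact absurd hs.1.1.1.symm (edgeTgt_gadget_ne_zero he)

-- Only clocks below `numClk A` are matched: `startEdge` may fire after a delay and does not
-- reset the others, which no guard or invariant can read.
theorem Trace.of_gadget (hWF : WellFormed A)
    (h : Trace (gadget A lf) (((l + 1, w', v), τ) :: rest)) (hl : l < numLoc A) :
    ∃ w τ rest, Trace A (((l, w, v), τ) :: rest) ∧ Set.EqOn w w' (Set.Iio (numClk A)) := by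
  generalize hs : (((l + 1, w', v), τ) :: rest : List (EState × ℝ)) = tr at h
  induction h generalizing l w' v τ rest with
  | init => simp [initState] at hs
  | @step tr₀ l₀ w₀ v₀ τ₀ t e htr ht hmid he hsrc hg hval ih =>
    simp only [List.cons.injEq, Prod.mk.injEq] at hs
    obtain ⟨⟨⟨hl', rfl, rfl⟩, -⟩, -⟩ := hs
    rcases eq_shiftEdge_or_startEdge he (by omega) with ⟨e₀, he₀, rfl⟩ | rfl
    · have hsrc₀ := hWF.edgeSrc_lt he₀
      have htgt₀ := hWF.edgeTgt_lt he₀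
      simp only [edgeSrc_shiftEdge] at hsrc
      subst hsrc
      simp only [edgeTgt_shiftEdge, Nat.add_right_cancel_iff] at hl'
      subst hl'
      obtain ⟨w₁, τ₁, rest₁, htr₁, hw₁⟩ := ih hsrc₀ rfl
      have hw₁₀ := htr₁.validState_head.2.1
      simp only [elapseEnergies_gadget_succ hWF hsrc₀, edgeGuard_shiftEdge, edgeTgt_shiftEdge,
        edgeResets_shiftEdge, edgeUpdates_shiftEdge, validState_gadget_succ_iff hWF htgt₀]
        at hmid hg hval ⊢
      refine ⟨_, _, _, Trace.step t e₀ htr₁ ht (fun t' h₀ h₁ => ?_) he₀ rfl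
        ((satIneqs_congr_clocks (eqOn_elapseClocks hw₁ t) _).2 hg)
        (validState_congr_clocks (eqOn_resetClocks (eqOn_elapseClocks hw₁ t) _)
          (resetClocks_nonneg (elapseClocks_nonneg hw₁₀ ht) _) hval),
        eqOn_resetClocks (eqOn_elapseClocks hw₁ t) _⟩
      exact validState_congr_clocks (eqOn_elapseClocks hw₁ t') (elapseClocks_nonneg hw₁₀ h₀)
        ((validState_gadget_succ_iff hWF hsrc₀).1 (hmid t' h₀ h₁))
    · simp only [startEdge, edgeSrc, edgeTgt, edgeResets, edgeUpdates] at hsrc hl' hval ⊢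
      subst hsrc
      obtain rfl : l = 0 := by omega
      obtain rfl := htr.energy_eq_zero_of_gadget_loc_zero
      have hreset : Set.EqOn (fun _ => 0) (resetClocks (List.range (numClk A))
          (elapseClocks w₀ t)) (Set.Iio (numClk A)) := fun i hi => by
        simp [resetClocks, show i < numClk A from hi]
      simp only [elapseEnergies_gadget_zero, updateEnergies_zeroVec] at hval ⊢
      rw [show 1 = 0 + 1 from rfl, validState_gadget_succ_iff hWF hWF.1] at hval
      exact ⟨_, 0, [], .init (validState_congr_clocks hreset (fun _ => le_rfl) hval), hreset⟩

theorem Trace.exists_privLoc_or_lf (hWF : WellFormed A) (h : Trace (gadget A lf) tr)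
    (hloc : pumpLoc A ≤ runLoc tr) : ∃ p ∈ tr, p.1.1 = privLoc A ∨ p.1.1 = lf + 1 := by
  induction h with
  | init => simp [runLoc, initState, pumpLoc] at hloc
  | @step tr₀ l₀ w₀ v₀ τ₀ t e _ _ _ he hsrc _ _ ih =>
    have hprev : ((l₀, w₀, v₀), τ₀) ∈ ((l₀, w₀, v₀), τ₀) :: tr₀ := List.mem_cons_self
    rcases hsrc ▸ edgeSrc_of_pumpLoc_le hWF he hloc with h | h | h
    · exact ⟨_, List.mem_cons_of_mem _ hprev, Or.inl h⟩
    · exact ⟨_, List.mem_cons_of_mem _ hprev, Or.inr h⟩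
    · obtain ⟨p, hp, hp'⟩ := ih (by simp [runLoc, h])
      exact ⟨p, List.mem_cons_of_mem _ hp, hp'⟩

theorem reachLoc_of_mem_EVpub (hWF : WellFormed A) (hlf : lf < numLoc A)
    (hv : v ∈ EVpub (gadget A lf)) : ReachLoc A lf := by
  obtain ⟨tr, ⟨htr, hfin, hpub⟩, -⟩ := hv
  obtain ⟨⟨⟨l, w, v⟩, τ⟩, hp, hpriv | rfl⟩ :=
    htr.exists_privLoc_or_lf hWF (by simp at hfin; simp [hfin, finLoc, pumpLoc])
  · exact absurd (by simpa using hpriv) (hpub _ hp)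
  obtain ⟨rest, hrest⟩ := htr.of_mem hp
  obtain ⟨w, τ, rest, hA, -⟩ := hrest.of_gadget hWF hlf
  exact ⟨_, _, hA, List.mem_cons_self, rfl⟩

end GadgetRuns

/-! ### Pumping -/

section Pumping

variable {A : GMETA} {lf : ℕ} {u v : ℕ → ℝ}

theorem loopReach_pump_unit (hWF : WellFormed A) {i : ℕ} (hi : i < numEn A) {c : ℤ}
    (hc : c = 1 ∨ c = -1) (hu : v + Pi.single i (c : ℝ) = u) (hu₀ : 0 ≤ u) :
    LoopReach (gadget A lf) (pumpLoc A) v u := by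
  intro w τ rest h
  refine ⟨[((pumpLoc A, w, v), τ)], by simp, ?_⟩
  rw [← hu, ← updateEnergies_unitVec hi]
  refine h.gadget_plainEdge_step hWF ?_ (by simp [pumpLoc]) (by simp [pumpLoc])
    (by rw [updateEnergies_unitVec hi, hu]; exact hu₀)
  simp only [edges_gadget, pumpEdges, List.mem_append, List.mem_flatMap, List.mem_range]
  exact Or.inr ⟨i, hi, by rcases hc with rfl | rfl <;> simp⟩

theorem loopReach_pump_single_nat (hWF : WellFormed A) {i : ℕ} (hi : i < numEn A) (hv : 0 ≤ v)
    (n : ℕ) : LoopReach (gadget A lf) (pumpLoc A) v (v + Pi.single i (n : ℝ)) ∧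
      LoopReach (gadget A lf) (pumpLoc A) (v + Pi.single i (n : ℝ)) v := by
  induction n with
  | zero => simpa using LoopReach.refl v
  | succ n ih =>
    have hsingle : ∀ m : ℕ, 0 ≤ v + Pi.single i (m : ℝ) := fun m =>
      add_nonneg hv (Pi.single_nonneg.2 m.cast_nonneg)
    refine ⟨ih.1.trans (loopReach_pump_unit hWF hi (Or.inl rfl) ?_ (hsingle (n + 1))),
      (loopReach_pump_unit hWF hi (Or.inr rfl) ?_ (hsingle n)).trans ih.2⟩
    all_goals rw [add_assoc, ← Pi.single_add]; push_cast; ring_nf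

theorem loopReach_pump_zero (hWF : WellFormed A) :
    ∀ k ≤ numEn A, ∀ v ∈ NatEnergies k,
      LoopReach (gadget A lf) (pumpLoc A) 0 v ∧ LoopReach (gadget A lf) (pumpLoc A) v 0 := by
  intro k
  induction k with
  | zero =>
    intro _ v hv
    obtain rfl : v = 0 := funext fun i => hv.2 i (Nat.zero_le i)
    exact ⟨.refl 0, .refl 0⟩
  | succ k ih =>
    intro hk v hv
    obtain ⟨m, hm⟩ := hv.1 k
    have hv' : Function.update v k 0 ∈ NatEnergies k := by
      refine ⟨fun i => ?_, fun i hi => ?_⟩ <;> rcases eq_or_ne i k with rfl | hik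
      · exact ⟨0, by simp⟩
      · simpa [hik] using hv.1 i
      · simp
      · simpa [hik] using hv.2 i (by omega)
    have hdecomp : Function.update v k 0 + Pi.single k (m : ℝ) = v := by
      rw [← hm, Pi.update_eq_sub_add_single]
      simp
    obtain ⟨hup, hdown⟩ := loopReach_pump_single_nat (lf := lf) hWF (i := k) (by omega)
      (nonneg_of_mem_natEnergies hv') m
    rw [hdecomp] at hup hdown
    exact ⟨(ih (by omega) _ hv').1.trans hup, hdown.trans (ih (by omega) _ hv').2⟩

theorem loopReach_pump (hWF : WellFormed A) (hv : v ∈ NatEnergies (numEn A))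
    (hu : u ∈ NatEnergies (numEn A)) : LoopReach (gadget A lf) (pumpLoc A) v u :=
  (loopReach_pump_zero hWF _ le_rfl v hv).2.trans (loopReach_pump_zero hWF _ le_rfl u hu).1

end Pumping

/-! ### Final energies of the gadget -/

section FinalEnergies

variable {A : GMETA} {lf : ℕ}

theorem natEnergies_subset_EVpriv (hWF : WellFormed A) :
    NatEnergies (numEn A) ⊆ EVpriv (gadget A lf) := by
  intro u hu
  have h₀ : Trace (gadget A lf) [((0, fun _ => 0, fun _ => 0), 0)] :=
    .init validState_gadget_zero
  have h₁ := (h₀.gadget_move hWF (l' := privLoc A) (by simp [edges_gadget]) (by simp [privLoc])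
    (by simp [privLoc])).gadget_move hWF (l' := pumpLoc A) (by simp [edges_gadget])
    (by simp [pumpLoc]) (by simp [pumpLoc])
  obtain ⟨pre, -, h₂⟩ := loopReach_pump hWF (zero_mem_natEnergies _) hu _ _ _ h₁
  refine ⟨_, ⟨h₂.gadget_move hWF (l' := finLoc A) (by simp [edges_gadget]) (by simp [finLoc])
    (by simp [finLoc]), by simp [runLoc], ((privLoc A, fun _ => 0, fun _ => 0), 0), by simp,
    by simp⟩, rfl⟩

theorem natEnergies_subset_EVpub (hWF : WellFormed A) (hD : Discrete A)
    (hreach : ReachLoc A lf) : NatEnergies (numEn A) ⊆ EVpub (gadget A lf) := by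
  intro u hu
  obtain ⟨tr, ⟨⟨l, w, v⟩, τ⟩, htr, hp, rfl⟩ := hreach
  obtain ⟨rest, hA⟩ := htr.of_mem hp
  have hl : l < numLoc A := hA.validState_head.1
  have h₀ : Trace (gadget A l)
      (((l + 1, w, v), τ) :: (rest.map shiftState ++ [(initState, 0)])) :=
    hA.to_gadget hWF
  have h₁ := h₀.gadget_move hWF (l' := pumpLoc A) (by simp [edges_gadget]) (by simp [pumpLoc])
    (by simp [pumpLoc])
  obtain ⟨pre, hpre, h₂⟩ :=
    loopReach_pump hWF (hA.runEnergy_mem_natEnergies hWF hD) hu _ _ _ h₁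
  refine ⟨_, ⟨h₂.gadget_move hWF (l' := finLoc A) (by simp [edges_gadget]) (by simp [finLoc])
    (by simp [finLoc]), by simp [runLoc], fun q hq => ?_⟩, rfl⟩
  simp only [List.mem_cons, List.mem_append, List.mem_map, List.not_mem_nil, or_false] at hq
  rcases hq with rfl | rfl | hq | rfl | ⟨q₀, hq₀, rfl⟩ | rfl
  · simp [privLoc, finLoc]
  · simp [privLoc, pumpLoc]
  · simp [hpre q hq, privLoc, pumpLoc]
  · simp [privLoc]
    omega
  · have := hA.loc_lt (List.mem_cons_of_mem _ hq₀)
    simp [shiftState, privLoc]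
    omega
  · simp [initState, privLoc]

theorem runEnergy_gadget_mem (hWF : WellFormed A) (hD : Discrete A) (hlf : lf < numLoc A)
    {tr : List (EState × ℝ)} (h : Trace (gadget A lf) tr) :
    runEnergy tr ∈ NatEnergies (numEn A) :=
  Trace.runEnergy_mem_natEnergies (B := gadget A lf) (wellFormed_gadget hWF hlf)
    (discrete_gadget hD) h

theorem EVpriv_gadget (hWF : WellFormed A) (hD : Discrete A) (hlf : lf < numLoc A) :
    EVpriv (gadget A lf) = NatEnergies (numEn A) :=
  subset_antisymm (fun _ ⟨_, ⟨h, _⟩, hv⟩ => hv ▸ runEnergy_gadget_mem hWF hD hlf h)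
    (natEnergies_subset_EVpriv hWF)

theorem EVpub_gadget_of_reachLoc (hWF : WellFormed A) (hD : Discrete A) (hlf : lf < numLoc A)
    (hreach : ReachLoc A lf) : EVpub (gadget A lf) = NatEnergies (numEn A) :=
  subset_antisymm (fun _ ⟨_, ⟨h, _⟩, hv⟩ => hv ▸ runEnergy_gadget_mem hWF hD hlf h)
    (natEnergies_subset_EVpub hWF hD hreach)

theorem EVpub_gadget_of_not_reachLoc (hWF : WellFormed A) (hlf : lf < numLoc A)
    (hreach : ¬ReachLoc A lf) : EVpub (gadget A lf) = ∅ :=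
  Set.eq_empty_of_forall_notMem fun _ hv => hreach (reachLoc_of_mem_EVpub hWF hlf hv)

end FinalEnergies

/-- For each δ ∈ {∃, weak, full}: every discrete META `A` with a
distinguished location `lf` can be effectively extended to a discrete META `A'` such
that `A'` is δ-EN-opaque iff `lf` is reachable in `A`.  Hence reachability in discrete
METAs reduces to δ-EN-opacity. -/
theorem reachability_reduces_to_ENOpacity :
    ∀ δ : Var3, ∃ g : GMETA × ℕ → GMETA, Computable g ∧
      ∀ (A : GMETA) (lf : ℕ),
        WellFormed A → Discrete A → ClockGuardsOnly A → lf < numLoc A →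
        WellFormed (g (A, lf)) ∧ Discrete (g (A, lf)) ∧ ClockGuardsOnly (g (A, lf)) ∧
          (ENOpaque δ (g (A, lf)) ↔ ReachLoc A lf) := by
  intro δ
  refine ⟨fun p => gadget p.1 p.2, primrec_gadget.to_comp, fun A lf hWF hD hCG hlf => ?_⟩
  exact ⟨wellFormed_gadget hWF hlf, discrete_gadget hD, clockGuardsOnly_gadget hCG,
    ENOpaque_iff_of_EV δ ⟨0, zero_mem_natEnergies _⟩ (EVpriv_gadget hWF hD hlf)
      (EVpub_gadget_of_reachLoc hWF hD hlf) (EVpub_gadget_of_not_reachLoc hWF hlf)⟩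

end METAOpacity
end

section
/- There exists a guarded META with one clock and one energy variable that is fully ET-opaque and fully EN-opaque but not weakly ET-EN-opaque (hence also not fully ET-EN-opaque). Consequently, full ET-opacity together with full EN-opacity does not imply weak (nor full) ET-EN-opacity. -/
namespace METAOpacity

open scoped Classical

/-- Full ET-opacity: the durations of private and public runs coincide. -/
def ETOpaqueFull (A : GMETA) : Prop := DTpriv A = DTpub A

/-! The witness has an initial location `0`, a private location `1` and a final location `2`;
its clock is never reset and its energy rates are zero. Leaving `0` or `1` at clock value `0`
or `1`, its runs observe (duration, final energy) `(0, 1)` and `(1, 0)` when they pass through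
the private location and `(0, 0)` and `(1, 1)` when they do not: private and public runs
have the same durations and the same energies, but pair them differently. -/

def fire (A : GMETA) (t : ℝ) (e : Edge) (p : EState × ℝ) : EState × ℝ :=
  ((edgeTgt e, resetClocks (edgeResets e) (elapseClocks p.1.2.1 t),
    updateEnergies (edgeUpdates e) (elapseEnergies A p.1.1 p.1.2.2 t)), p.2 + t)

theorem DTpriv_eq_image_DEVpriv (A : GMETA) : DTpriv A = Prod.fst '' DEVpriv A := by
  ext d; simp [DTpriv, DEVpriv]

theorem DTpub_eq_image_DEVpub (A : GMETA) : DTpub A = Prod.fst '' DEVpub A := by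
  ext d; simp [DTpub, DEVpub]

theorem EVpriv_eq_image_DEVpriv (A : GMETA) : EVpriv A = Prod.snd '' DEVpriv A := by
  ext v; simp [EVpriv, DEVpriv]

theorem EVpub_eq_image_DEVpub (A : GMETA) : EVpub A = Prod.snd '' DEVpub A := by
  ext v; simp [EVpub, DEVpub]

theorem updateEnergies_nonneg {U : List ℤ} {v : ℕ → ℝ} (hU : ∀ z ∈ U, 0 ≤ z)
    (hv : ∀ i, 0 ≤ v i) (i : ℕ) : 0 ≤ updateEnergies U v i := by
  have hz : 0 ≤ U.getD i 0 := by
    rw [List.getD_eq_getElem?_getD]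
    cases hi : U[i]? with
    | none => exact le_rfl
    | some z => exact hU z (List.mem_of_getElem? hi)
  exact add_nonneg (hv i) (Int.cast_nonneg hz)

theorem resetClocks_elapseClocks_nonneg (R : List ℕ) {w : ℕ → ℝ} {t : ℝ} (hw : ∀ i, 0 ≤ w i)
    (ht : 0 ≤ t) (i : ℕ) : 0 ≤ resetClocks R (elapseClocks w t) i := by
  unfold resetClocks elapseClocks
  split_ifs
  exacts [le_rfl, add_nonneg (hw i) ht]

theorem updateEnergies_singleton_zero (v : ℕ → ℝ) : updateEnergies [0] v = v := by
  funext i; rcases i with _ | i <;> simp [updateEnergies]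

theorem updateEnergies_singleton_one :
    updateEnergies [1] (fun _ => 0) = Pi.single 0 (1 : ℝ) := by
  funext i; rcases i with _ | i <;> simp [updateEnergies]

namespace Trace

variable {A : GMETA}

theorem ne_nil {tr : List (EState × ℝ)} (h : Trace A tr) : tr ≠ [] := by
  cases h <;> simp

theorem validState_head_s18 {p : EState × ℝ} {tr : List (EState × ℝ)} (h : Trace A (p :: tr)) :
    validState A p.1 := by
  cases h with
  | init h => exact h
  | step _ _ _ _ _ _ _ _ h => exact h

theorem eq_init_of_singleton {p : EState × ℝ} (h : Trace A [p]) : p = (initState, 0) := by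
  cases h; rfl

theorem exists_fire {p q : EState × ℝ} {tr : List (EState × ℝ)} (h : Trace A (p :: q :: tr)) :
    ∃ t e, 0 ≤ t ∧ e ∈ edges A ∧ edgeSrc e = q.1.1 ∧
      satIneqs A (elapseClocks q.1.2.1 t) (elapseEnergies A q.1.1 q.1.2.2 t) (edgeGuard e) ∧
      p = fire A t e q ∧ Trace A (q :: tr) := by
  cases h with
  | step t e h ht _ he hsrc hg _ => exact ⟨t, e, ht, he, hsrc, hg, rfl, h⟩

theorem eq_init_of_loc_eq_zero (hA : ∀ e ∈ edges A, edgeTgt e ≠ 0) {p : EState × ℝ}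
    {tr : List (EState × ℝ)} (h : Trace A (p :: tr)) (hp : p.1.1 = 0) :
    p :: tr = [(initState, 0)] := by
  rcases tr with _ | ⟨q, tr⟩
  · rw [h.eq_init_of_singleton]
  · obtain ⟨t, e, -, he, -, -, rfl, -⟩ := h.exists_fire
    exact absurd hp (hA e he)

end Trace

/-- `x ≤ 0` -/
def guardAtZero : List Ineq := [(0, 1, 0)]

/-- `x = 1` -/
def guardAtOne : List Ineq := [(0, 2, 1), (0, 1, 1)]

def enterSecret : Edge := (0, guardAtZero, none, [], [0], 1)
def secretFast : Edge := (1, guardAtZero, none, [], [1], 2)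
def secretSlow : Edge := (1, guardAtOne, none, [], [0], 2)
def publicFast : Edge := (0, guardAtZero, none, [], [0], 2)
def publicSlow : Edge := (0, guardAtOne, none, [], [1], 2)

def swapAut : GMETA :=
  (0, 3, 1, 1, [1], [2], [[], [], []], [[0], [0], [0]],
    [enterSecret, secretFast, secretSlow, publicFast, publicSlow])

theorem mem_edges_swapAut {e : Edge} :
    e ∈ edges swapAut ↔
      e = enterSecret ∨ e = secretFast ∨ e = secretSlow ∨ e = publicFast ∨ e = publicSlow := by
  simp [swapAut, edges]

theorem wellFormed_swapAut : WellFormed swapAut := by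
  refine ⟨by decide, by decide, by decide, by decide, by decide, rfl, by decide, rfl, by decide,
    fun e he => ?_⟩
  rcases mem_edges_swapAut.1 he with rfl | rfl | rfl | rfl | rfl <;>
    simp [edgeSrc, edgeTgt, edgeAct, edgeGuard, edgeResets, edgeUpdates, numLoc, finalLocs,
      numClk, numEn, swapAut, enterSecret, secretFast, secretSlow, publicFast, publicSlow,
      guardAtZero, guardAtOne]

theorem positive_swapAut : Positive swapAut := by
  unfold Positive
  decide

theorem edgeTgt_swapAut_ne_zero : ∀ e ∈ edges swapAut, edgeTgt e ≠ 0 := by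
  decide

theorem edgeTgt_swapAut_lt : ∀ e ∈ edges swapAut, edgeTgt e < 3 := by
  decide

theorem elapseEnergies_swapAut (l : ℕ) (v : ℕ → ℝ) (t : ℝ) :
    elapseEnergies swapAut l v t = v := by
  have hrate : ∀ i, rateOf swapAut l i = 0 := by
    intro i; rcases l with _ | _ | _ | l <;> rcases i with _ | i <;> rfl
  funext i; simp [elapseEnergies, hrate]

theorem validState_swapAut_iff {l : ℕ} {w v : ℕ → ℝ} :
    validState swapAut (l, w, v) ↔ l < 3 ∧ (∀ i, 0 ≤ w i) ∧ ∀ i, 0 ≤ v i := by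
  have hinv : invOf swapAut l = [] := by rcases l with _ | _ | _ | l <;> rfl
  have hloc : numLoc swapAut = 3 := rfl
  simp [validState, hinv, satIneqs, hloc]

theorem satIneqs_guardAtZero {w v : ℕ → ℝ} : satIneqs swapAut w v guardAtZero ↔ w 0 ≤ 0 := by
  simp [satIneqs, guardAtZero, varVal, cmpSat, numClk, swapAut]

theorem satIneqs_guardAtOne {w v : ℕ → ℝ} : satIneqs swapAut w v guardAtOne ↔ w 0 = 1 := by
  rw [le_antisymm_iff, and_comm]
  simp [satIneqs, guardAtOne, varVal, cmpSat, numClk, swapAut]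

theorem delay_eq_zero_of_guardAtZero {w v : ℕ → ℝ} {t : ℝ} (hw : w 0 = 0) (ht : 0 ≤ t)
    (hg : satIneqs swapAut (elapseClocks w t) v guardAtZero) : t = 0 := by
  rw [satIneqs_guardAtZero, elapseClocks, hw] at hg
  linarith

theorem delay_eq_one_of_guardAtOne {w v : ℕ → ℝ} {t : ℝ} (hw : w 0 = 0)
    (hg : satIneqs swapAut (elapseClocks w t) v guardAtOne) : t = 1 := by
  rwa [satIneqs_guardAtOne, elapseClocks, hw, zero_add] at hg

theorem Trace.fire_swapAut {p : EState × ℝ} {tr : List (EState × ℝ)} {t : ℝ} {e : Edge}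
    (h : Trace swapAut (p :: tr)) (ht : 0 ≤ t) (he : e ∈ edges swapAut)
    (hsrc : edgeSrc e = p.1.1)
    (hg : satIneqs swapAut (elapseClocks p.1.2.1 t) (elapseEnergies swapAut p.1.1 p.1.2.2 t)
      (edgeGuard e)) :
    Trace swapAut (fire swapAut t e p :: p :: tr) := by
  obtain ⟨⟨l, w, v⟩, τ⟩ := p
  obtain ⟨hl, hw, hv⟩ := validState_swapAut_iff.1 h.validState_head_s18
  refine Trace.step t e h ht (fun t' ht' _ => ?_) he hsrc hg ?_ <;>
    rw [elapseEnergies_swapAut, validState_swapAut_iff]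
  · exact ⟨hl, fun i => add_nonneg (hw i) ht', hv⟩
  · exact ⟨edgeTgt_swapAut_lt e he, resetClocks_elapseClocks_nonneg _ hw ht,
      updateEnergies_nonneg (positive_swapAut.2 e he) hv⟩

def atSecret : EState × ℝ := fire swapAut 0 enterSecret (initState, 0)

def secretFastRun : List (EState × ℝ) :=
  [fire swapAut 0 secretFast atSecret, atSecret, (initState, 0)]

def secretSlowRun : List (EState × ℝ) :=
  [fire swapAut 1 secretSlow atSecret, atSecret, (initState, 0)]

def publicFastRun : List (EState × ℝ) :=
  [fire swapAut 0 publicFast (initState, 0), (initState, 0)]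

def publicSlowRun : List (EState × ℝ) :=
  [fire swapAut 1 publicSlow (initState, 0), (initState, 0)]

theorem atSecret_clock : atSecret.1.2.1 0 = 0 := by
  simp [atSecret, fire, resetClocks, elapseClocks, initState]

theorem trace_swapAut_eq_of_loc_eq_one {p : EState × ℝ} {tr : List (EState × ℝ)}
    (h : Trace swapAut (p :: tr)) (hp : p.1.1 = 1) : p :: tr = [atSecret, (initState, 0)] := by
  rcases tr with _ | ⟨q, tr⟩
  · rw [h.eq_init_of_singleton] at hp
    cases hp
  obtain ⟨t, e, ht, he, hsrc, hg, rfl, hq⟩ := h.exists_fire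
  rcases mem_edges_swapAut.1 he with rfl | rfl | rfl | rfl | rfl
  · obtain ⟨rfl, rfl⟩ := List.cons_eq_cons.1
      (hq.eq_init_of_loc_eq_zero edgeTgt_swapAut_ne_zero hsrc.symm)
    rw [delay_eq_zero_of_guardAtZero rfl ht hg]
    rfl
  all_goals cases hp

theorem trace_swapAut_of_loc_eq_two {p : EState × ℝ} {tr : List (EState × ℝ)}
    (h : Trace swapAut (p :: tr)) (hp : p.1.1 = 2) :
    p :: tr = secretFastRun ∨ p :: tr = secretSlowRun ∨
      p :: tr = publicFastRun ∨ p :: tr = publicSlowRun := by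
  rcases tr with _ | ⟨q, tr⟩
  · rw [h.eq_init_of_singleton] at hp
    cases hp
  obtain ⟨t, e, ht, he, hsrc, hg, rfl, hq⟩ := h.exists_fire
  rcases mem_edges_swapAut.1 he with rfl | rfl | rfl | rfl | rfl
  · cases hp
  · obtain ⟨rfl, rfl⟩ := List.cons_eq_cons.1 (trace_swapAut_eq_of_loc_eq_one hq hsrc.symm)
    rw [delay_eq_zero_of_guardAtZero atSecret_clock ht hg]
    exact Or.inl rfl
  · obtain ⟨rfl, rfl⟩ := List.cons_eq_cons.1 (trace_swapAut_eq_of_loc_eq_one hq hsrc.symm)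
    rw [delay_eq_one_of_guardAtOne atSecret_clock hg]
    exact Or.inr (Or.inl rfl)
  · obtain ⟨rfl, rfl⟩ := List.cons_eq_cons.1
      (hq.eq_init_of_loc_eq_zero edgeTgt_swapAut_ne_zero hsrc.symm)
    rw [delay_eq_zero_of_guardAtZero rfl ht hg]
    exact Or.inr (Or.inr (Or.inl rfl))
  · obtain ⟨rfl, rfl⟩ := List.cons_eq_cons.1
      (hq.eq_init_of_loc_eq_zero edgeTgt_swapAut_ne_zero hsrc.symm)
    rw [delay_eq_one_of_guardAtOne rfl hg]
    exact Or.inr (Or.inr (Or.inr rfl))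

theorem trace_swapAut_init : Trace swapAut [(initState, 0)] :=
  Trace.init (validState_swapAut_iff.2 ⟨by decide, fun _ => le_rfl, fun _ => le_rfl⟩)

theorem trace_swapAut_atSecret : Trace swapAut [atSecret, (initState, 0)] :=
  trace_swapAut_init.fire_swapAut le_rfl (mem_edges_swapAut.2 (Or.inl rfl)) rfl
    (satIneqs_guardAtZero.2 (by simp [elapseClocks, initState]))

theorem trace_secretFastRun : Trace swapAut secretFastRun :=
  trace_swapAut_atSecret.fire_swapAut le_rfl (by simp [mem_edges_swapAut]) rfl
    (satIneqs_guardAtZero.2 (by simp [elapseClocks, atSecret_clock]))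

theorem trace_secretSlowRun : Trace swapAut secretSlowRun :=
  trace_swapAut_atSecret.fire_swapAut zero_le_one (by simp [mem_edges_swapAut]) rfl
    (satIneqs_guardAtOne.2 (by simp [elapseClocks, atSecret_clock]))

theorem trace_publicFastRun : Trace swapAut publicFastRun :=
  trace_swapAut_init.fire_swapAut le_rfl (by simp [mem_edges_swapAut]) rfl
    (satIneqs_guardAtZero.2 (by simp [elapseClocks, initState]))

theorem trace_publicSlowRun : Trace swapAut publicSlowRun :=
  trace_swapAut_init.fire_swapAut zero_le_one (by simp [mem_edges_swapAut]) rfl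
    (satIneqs_guardAtOne.2 (by simp [elapseClocks, initState]))

theorem privRun_swapAut_iff {tr : List (EState × ℝ)} :
    PrivRun swapAut tr ↔ tr = secretFastRun ∨ tr = secretSlowRun := by
  constructor
  · rintro ⟨h, hfin, p, hp, hpriv⟩
    obtain ⟨q, tr, rfl⟩ := List.exists_cons_of_ne_nil h.ne_nil
    rcases trace_swapAut_of_loc_eq_two h (by simpa [runLoc, finalLocs, swapAut] using hfin)
      with h | h | h | h
    · exact Or.inl h
    · exact Or.inr h
    all_goals
      rw [h] at hp
      simp only [publicFastRun, publicSlowRun, List.mem_cons, List.not_mem_nil, or_false] at hp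
      rcases hp with rfl | rfl <;> exact absurd hpriv (by decide)
  · rintro (rfl | rfl)
    · exact ⟨trace_secretFastRun, by decide, atSecret, by simp [secretFastRun], by decide⟩
    · exact ⟨trace_secretSlowRun, by decide, atSecret, by simp [secretSlowRun], by decide⟩

theorem pubRun_swapAut_iff {tr : List (EState × ℝ)} :
    PubRun swapAut tr ↔ tr = publicFastRun ∨ tr = publicSlowRun := by
  constructor
  · rintro ⟨h, hfin, hpub⟩
    obtain ⟨q, tr, rfl⟩ := List.exists_cons_of_ne_nil h.ne_nil
    rcases trace_swapAut_of_loc_eq_two h (by simpa [runLoc, finalLocs, swapAut] using hfin)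
      with h | h | h | h
    · exact absurd (by decide) (hpub atSecret (by simp [h, secretFastRun]))
    · exact absurd (by decide) (hpub atSecret (by simp [h, secretSlowRun]))
    · exact Or.inl h
    · exact Or.inr h
  · rintro (rfl | rfl)
    · exact ⟨trace_publicFastRun, by decide, by decide⟩
    · exact ⟨trace_publicSlowRun, by decide, by decide⟩

theorem runDur_secretFastRun : runDur secretFastRun = 0 := by
  simp [runDur, secretFastRun, atSecret, fire]

theorem runDur_secretSlowRun : runDur secretSlowRun = 1 := by
  simp [runDur, secretSlowRun, atSecret, fire]

theorem runDur_publicFastRun : runDur publicFastRun = 0 := by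
  simp [runDur, publicFastRun, fire]

theorem runDur_publicSlowRun : runDur publicSlowRun = 1 := by
  simp [runDur, publicSlowRun, fire]

theorem runEnergy_secretFastRun : runEnergy secretFastRun = Pi.single 0 1 := by
  simp [runEnergy, secretFastRun, atSecret, fire, elapseEnergies_swapAut, edgeUpdates,
    enterSecret, secretFast, initState, updateEnergies_singleton_zero,
    updateEnergies_singleton_one]

theorem runEnergy_secretSlowRun : runEnergy secretSlowRun = 0 := by
  simp [runEnergy, secretSlowRun, atSecret, fire, elapseEnergies_swapAut, edgeUpdates,
    enterSecret, secretSlow, initState, updateEnergies_singleton_zero, Pi.zero_def]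

theorem runEnergy_publicFastRun : runEnergy publicFastRun = 0 := by
  simp [runEnergy, publicFastRun, fire, elapseEnergies_swapAut, edgeUpdates, publicFast,
    initState, updateEnergies_singleton_zero, Pi.zero_def]

theorem runEnergy_publicSlowRun : runEnergy publicSlowRun = Pi.single 0 1 := by
  simp [runEnergy, publicSlowRun, fire, elapseEnergies_swapAut, edgeUpdates, publicSlow,
    initState, updateEnergies_singleton_one]

theorem DEVpriv_swapAut : DEVpriv swapAut = {(0, Pi.single 0 1), (1, 0)} := by
  ext ⟨d, v⟩
  simp [DEVpriv, privRun_swapAut_iff, or_and_right, exists_or, runDur_secretFastRun,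
    runDur_secretSlowRun, runEnergy_secretFastRun, runEnergy_secretSlowRun, eq_comm]

theorem DEVpub_swapAut : DEVpub swapAut = {(0, 0), (1, Pi.single 0 1)} := by
  ext ⟨d, v⟩
  simp [DEVpub, pubRun_swapAut_iff, or_and_right, exists_or, runDur_publicFastRun,
    runDur_publicSlowRun, runEnergy_publicFastRun, runEnergy_publicSlowRun, eq_comm]

theorem not_ETENOpaque_weak_swapAut : ¬ ETENOpaque Var3.weak swapAut := by
  intro h
  have hmem : ((1 : ℝ), (0 : ℕ → ℝ)) ∈ DEVpub swapAut := h (by simp [DEVpriv_swapAut])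
  have hne : (0 : ℕ → ℝ) ≠ Pi.single 0 1 := (Pi.single_ne_zero_iff.2 one_ne_zero).symm
  simp [DEVpub_swapAut, hne] at hmem

/-- There exists a guarded META with one clock and one energy
variable that is fully ET-opaque and fully EN-opaque but neither weakly nor fully
ET-EN-opaque.  Consequently, full ET-opacity together with full EN-opacity does not
imply weak (nor full) ET-EN-opacity. -/
theorem fullET_and_fullEN_not_imp_weakETEN :
    ∃ A : GMETA, WellFormed A ∧ numClk A = 1 ∧ numEn A = 1 ∧
      ETOpaqueFull A ∧ ENOpaque Var3.full A ∧
      ¬ ETENOpaque Var3.weak A ∧ ¬ ETENOpaque Var3.full A := by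
  refine ⟨swapAut, wellFormed_swapAut, rfl, rfl, ?_, ?_, not_ETENOpaque_weak_swapAut,
    fun h => not_ETENOpaque_weak_swapAut h.subset⟩
  · rw [ETOpaqueFull, DTpriv_eq_image_DEVpriv, DTpub_eq_image_DEVpub, DEVpriv_swapAut,
      DEVpub_swapAut]
    simp [Set.image_insert_eq]
  · show EVpriv swapAut = EVpub swapAut
    rw [EVpriv_eq_image_DEVpriv, EVpub_eq_image_DEVpub, DEVpriv_swapAut, DEVpub_swapAut]
    simp [Set.image_insert_eq, Set.pair_comm]

end METAOpacity
end
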